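/- arXiv:1702.04538 — 3 statements merged into one kernel-verified Lean document; each statement's English description precedes it below -/
import Mathlib

section
/- In a jointly strongly connected time-varying digraph on nodes {1,...,N}, suppose each node i holds a value V_i(t) ∈ ℝ that is nondecreasing in t, and whenever edge (i,j) is active at time t, V_j(t+1) ≥ V_i(t). If all V_i are eventually stationary, then all stationary values are equal. -/
/-!
After time `T` the values are frozen, so an edge `(i, j)` active at some `τ ≥ T` gives
`V i T = V i τ ≤ V j (τ + 1) = V j T`. Hence the stationary values are nondecreasing along
every path of the union graph from time `T` on, and strong connectivity makes this order
symmetric.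
-/

theorem Relation.ReflTransGen.map_le {α β : Type*} [Preorder β] {r : α → α → Prop}
    (f : α → β) (h : ∀ a b, r a b → f a ≤ f b) {a b : α} (hab : Relation.ReflTransGen r a b) :
    f a ≤ f b := by
  simpa only [Relation.reflTransGen_eq_self] using hab.lift f h

theorem stationary_le_of_active_edge {ι β : Type*} [Preorder β] (E : ℕ → ι → ι → Prop)
    (V : ι → ℕ → β) (hedge : ∀ t i j, E t i j → V i t ≤ V j (t + 1))
    (T : ℕ) (hstat : ∀ i, ∀ t ≥ T, V i t = V i T) {i j : ι} {τ : ℕ} (hτ : T ≤ τ)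
    (he : E τ i j) : V i T ≤ V j T :=
  calc V i T = V i τ := (hstat i τ hτ).symm
    _ ≤ V j (τ + 1) := hedge τ i j he
    _ = V j T := hstat j (τ + 1) (hτ.trans τ.le_succ)

theorem jointly_connected_consensus_general (N : ℕ)
    (E : ℕ → Fin N → Fin N → Prop)
    (hconn : ∀ t : ℕ, ∀ i j : Fin N,
      Relation.ReflTransGen (fun a b => ∃ τ ≥ t, E τ a b) i j)
    (V : Fin N → ℕ → ℝ)
    (hedge : ∀ t i j, E t i j → V i t ≤ V j (t + 1))
    (T : ℕ) (hstat : ∀ i, ∀ t ≥ T, V i t = V i T) :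
    ∀ i j : Fin N, V i T = V j T := by
  have stationary_le : ∀ i j : Fin N, V i T ≤ V j T := fun i j =>
    (hconn T i j).map_le (V · T) fun _ _ ⟨_, hτ, he⟩ =>
      stationary_le_of_active_edge E V hedge T hstat hτ he
  exact fun i j => le_antisymm (stationary_le i j) (stationary_le j i)

/-- Consensus over a jointly strongly connected time-varying digraph: if each
node's value `V i t` is nondecreasing in `t`, an active edge `(i, j)` at time
`t` forces `V j (t+1) ≥ V i t`, the union digraph from every time on is
strongly connected, and all values are eventually stationary, then all the
stationary values coincide. -/
theorem jointly_connected_consensus (N : ℕ)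
    (E : ℕ → Fin N → Fin N → Prop)
    (hconn : ∀ t : ℕ, ∀ i j : Fin N,
      Relation.ReflTransGen (fun a b => ∃ τ ≥ t, E τ a b) i j)
    (V : Fin N → ℕ → ℝ)
    (hmono : ∀ i, Monotone (V i))
    (hedge : ∀ t i j, E t i j → V i t ≤ V j (t + 1))
    (T : ℕ) (hstat : ∀ i, ∀ t ≥ T, V i t = V i T) :
    ∀ i j : Fin N, V i T = V j T :=
  jointly_connected_consensus_general N E hconn V hedge T hstat
end

section
/- If C̄ ⊆ S is a set such that for every node i the set C̄ is an ε-core-set of a subset P_i ⊆ S with s_i ∈ P_i and ∪_i P_i = S, and r(C̄) ≤ r(S), then ||c(C̄) − s_i|| ≤ (1+ε)·r(S) for all i, i.e., C̄ is an ε-core-set of S = {s_1,...,s_N}. -/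
open scoped Classical

/-- The radius of the minimum enclosing ball of a finite set of points. -/
noncomputable def mebRadius {d : ℕ} (C : Finset (EuclideanSpace ℝ (Fin d))) : ℝ :=
  sInf {ρ : ℝ | 0 ≤ ρ ∧ ∃ z : EuclideanSpace ℝ (Fin d), ∀ p ∈ C, dist z p ≤ ρ}

/-- The center of the minimum enclosing ball of a finite set of points. -/
noncomputable def mebCenter {d : ℕ} (C : Finset (EuclideanSpace ℝ (Fin d))) :
    EuclideanSpace ℝ (Fin d) :=
  if h : ∃ z : EuclideanSpace ℝ (Fin d), ∀ p ∈ C, dist z p ≤ mebRadius C then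
    h.choose else 0

lemma mebRadius_mono {d : ℕ} {A B : Finset (EuclideanSpace ℝ (Fin d))} (hAB : A ⊆ B) :
    mebRadius A ≤ mebRadius B := by
  apply csInf_le_csInf
  · exact ⟨0, fun ρ hρ => hρ.1⟩
  · refine ⟨∑ p ∈ B, dist 0 p, Finset.sum_nonneg fun p _ => dist_nonneg, 0, fun p hp => ?_⟩
    exact Finset.single_le_sum (f := fun q => dist 0 q) (fun q _ => dist_nonneg) hp
  · rintro ρ ⟨hρ, z, hz⟩
    exact ⟨hρ, z, fun p hp => hz p (hAB hp)⟩

theorem local_coresets_give_global_coreset_general {d N : ℕ} (ε : ℝ) (hε : 0 ≤ ε)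
    (s : Fin N → EuclideanSpace ℝ (Fin d))
    (S : Finset (EuclideanSpace ℝ (Fin d)))
    (Cbar : Finset (EuclideanSpace ℝ (Fin d)))
    (P : Fin N → Finset (EuclideanSpace ℝ (Fin d)))
    (hPS : ∀ i, P i ⊆ S) (hsP : ∀ i, s i ∈ P i)
    (hcore : ∀ i, ∀ p ∈ P i, dist (mebCenter Cbar) p ≤ (1 + ε) * mebRadius (P i)) :
    ∀ i, dist (mebCenter Cbar) (s i) ≤ (1 + ε) * mebRadius S := by
  intro i
  calc dist (mebCenter Cbar) (s i) ≤ (1 + ε) * mebRadius (P i) := hcore i (s i) (hsP i)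
    _ ≤ (1 + ε) * mebRadius S :=
      mul_le_mul_of_nonneg_left (mebRadius_mono (hPS i)) (by linarith)

/-- If `C̄ ⊆ S` is an ε-core-set of every local subset `Pᵢ ⊆ S` with `sᵢ ∈ Pᵢ`
and `⋃ᵢ Pᵢ = S`, and `r(C̄) ≤ r(S)`, then `C̄` is an ε-core-set of
`S = {s₁, …, s_N}`: every `sᵢ` is within `(1+ε)·r(S)` of `c(C̄)`. -/
theorem local_coresets_give_global_coreset {d N : ℕ} (ε : ℝ) (hε : 0 ≤ ε)
    (s : Fin N → EuclideanSpace ℝ (Fin d))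
    (S : Finset (EuclideanSpace ℝ (Fin d)))
    (hS : S = Finset.image s Finset.univ)
    (Cbar : Finset (EuclideanSpace ℝ (Fin d))) (hCS : Cbar ⊆ S)
    (P : Fin N → Finset (EuclideanSpace ℝ (Fin d)))
    (hPS : ∀ i, P i ⊆ S) (hsP : ∀ i, s i ∈ P i)
    (hcover : S = Finset.univ.biUnion P)
    (hcore : ∀ i, ∀ p ∈ P i, dist (mebCenter Cbar) p ≤ (1 + ε) * mebRadius (P i))
    (hrad : mebRadius Cbar ≤ mebRadius S) :
    ∀ i, dist (mebCenter Cbar) (s i) ≤ (1 + ε) * mebRadius S :=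
  local_coresets_give_global_coreset_general ε hε s S Cbar P hPS hsP hcore
end

section
/- Complementary slackness for the MEB: if x* is an optimal solution of the dual MEB problem and z* = Σ_i x_i* s_i is the MEB center with radius r_*, then x_i* > 0 implies ||z* − s_i|| = r_*, i.e., positive dual weights occur only on points lying on the boundary of the minimum enclosing ball. -/
/-!
For weights `x` in the simplex with center `z = ∑ xᵢ sᵢ`, the dual objective `f x` equals the
weighted mean `∑ xᵢ ‖z - sᵢ‖²` of the squared distances to the center (parallel-axis identity).
Moving the optimal weights `x*` by a step `t` towards the vertex `eₖ` turns the objective into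
`(1 - t) f(x*) + t (1 - t) ‖z* - sₖ‖²`, so optimality forces `‖z* - sₖ‖² ≤ f(x*) = r*²` for every
`k`. A weighted mean of numbers bounded by `r*²` equals `r*²` only if every number of positive
weight equals `r*²`.
-/

open Finset

theorem nonpos_of_forall_le_mul {a b : ℝ} (h : ∀ t, 0 < t → t ≤ 1 → a ≤ t * b) : a ≤ 0 := by
  by_contra! ha
  have hb : a ≤ b := by simpa using h 1 one_pos le_rfl
  have hb0 : 0 < b := ha.trans_le hb
  have := h (a / (2 * b)) (by positivity) (by rw [div_le_one (by positivity)]; linarith)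
  rw [div_mul_eq_mul_div, mul_div_mul_right a 2 hb0.ne'] at this
  linarith

section

variable {ι : Type*} [Fintype ι]

theorem eq_of_sum_mul_eq_of_forall_le {w g : ι → ℝ} {M : ℝ} (hw : w ∈ stdSimplex ℝ ι)
    (hg : ∀ i, g i ≤ M) (hsum : ∑ i, w i * g i = M) {i : ι} (hi : 0 < w i) : g i = M := by
  have hgap : ∑ j, w j * (M - g j) = 0 := by
    simp only [mul_sub, sum_sub_distrib, ← sum_mul, hw.2, hsum]
    ring
  rw [sum_eq_zero_iff_of_nonneg fun j _ => mul_nonneg (hw.1 j) (sub_nonneg.2 (hg j))] at hgap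
  rcases mul_eq_zero.1 (hgap i (mem_univ i)) with h | h
  · exact absurd h hi.ne'
  · linarith

variable {E : Type*} [NormedAddCommGroup E] [InnerProductSpace ℝ E]

noncomputable def mebDual (s : ι → E) (x : ι → ℝ) : ℝ :=
  ∑ i, x i * ‖s i‖ ^ 2 - ‖∑ i, x i • s i‖ ^ 2

theorem sum_mul_norm_sub_sq (s : ι → E) {x : ι → ℝ} (hx : ∑ i, x i = 1) (c : E) :
    ∑ i, x i * ‖c - s i‖ ^ 2 = mebDual s x + ‖c - ∑ i, x i • s i‖ ^ 2 := by
  have hinner : ∑ i, x i * inner ℝ c (s i) = inner ℝ c (∑ i, x i • s i) := by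
    simp only [inner_sum, real_inner_smul_right]
  simp only [mebDual, norm_sub_sq_real, mul_add, mul_sub, sum_add_distrib, sum_sub_distrib,
    ← sum_mul, hx, ← mul_sum, mul_left_comm _ (2 : ℝ), hinner]
  ring

theorem mebDual_eq_sum_mul_norm_sub_sq (s : ι → E) {x : ι → ℝ} (hx : ∑ i, x i = 1) :
    mebDual s x = ∑ i, x i * ‖∑ j, x j • s j - s i‖ ^ 2 := by
  simp [sum_mul_norm_sub_sq s hx]

variable [DecidableEq ι]

theorem mebDual_smul_add_smul_single (s : ι → E) {x : ι → ℝ} (hx : ∑ i, x i = 1) (k : ι)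
    (t : ℝ) :
    mebDual s ((1 - t) • x + t • Pi.single k 1) =
      (1 - t) * mebDual s x + t * (1 - t) * ‖∑ i, x i • s i - s k‖ ^ 2 := by
  set y := (1 - t) • x + t • Pi.single k (1 : ℝ)
  set z := ∑ i, x i • s i
  have hy : ∑ i, y i = 1 := by
    simp [y, sum_add_distrib, ← mul_sum, hx]
  have hyz : ∑ i, y i • s i = (1 - t) • z + t • s k := by
    simp [y, z, add_smul, sum_add_distrib, mul_smul, ← smul_sum, Pi.single_apply, ite_smul]
  have hys : ∑ i, y i * ‖z - s i‖ ^ 2 = (1 - t) * mebDual s x + t * ‖z - s k‖ ^ 2 := by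
    simp [y, z, add_mul, sum_add_distrib, mul_assoc, ← mul_sum, Pi.single_apply, ite_mul,
      mebDual_eq_sum_mul_norm_sub_sq s hx]
  have hcenter : z - ∑ i, y i • s i = t • (z - s k) := by
    rw [hyz, smul_sub, sub_smul, one_smul]
    abel
  have := sum_mul_norm_sub_sq s hy z
  rw [hys, hcenter, norm_smul, mul_pow, Real.norm_eq_abs, sq_abs] at this
  linarith

theorem norm_sub_sq_le_mebDual_of_isMaxOn (s : ι → E) {x : ι → ℝ} (hx : x ∈ stdSimplex ℝ ι)
    (hmax : IsMaxOn (mebDual s) (stdSimplex ℝ ι) x) (k : ι) :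
    ‖∑ i, x i • s i - s k‖ ^ 2 ≤ mebDual s x := by
  suffices ‖∑ i, x i • s i - s k‖ ^ 2 - mebDual s x ≤ 0 by linarith
  refine nonpos_of_forall_le_mul (b := ‖∑ i, x i • s i - s k‖ ^ 2) fun t ht0 ht1 => ?_
  have hmem : (1 - t) • x + t • Pi.single k 1 ∈ stdSimplex ℝ ι :=
    convex_stdSimplex ℝ ι hx (single_mem_stdSimplex ℝ k) (by linarith) ht0.le (by ring)
  have := isMaxOn_iff.1 hmax _ hmem
  rw [mebDual_smul_add_smul_single s hx.2] at this
  nlinarith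

theorem norm_sub_sq_eq_mebDual_of_isMaxOn (s : ι → E) {x : ι → ℝ} (hx : x ∈ stdSimplex ℝ ι)
    (hmax : IsMaxOn (mebDual s) (stdSimplex ℝ ι) x) {i : ι} (hi : 0 < x i) :
    ‖∑ j, x j • s j - s i‖ ^ 2 = mebDual s x :=
  eq_of_sum_mul_eq_of_forall_le hx (norm_sub_sq_le_mebDual_of_isMaxOn s hx hmax)
    (mebDual_eq_sum_mul_norm_sub_sq s hx.2).symm hi

end

theorem meb_complementary_slackness_general (d N : ℕ)
    (s : Fin N → EuclideanSpace ℝ (Fin d))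
    (xstar : Fin N → ℝ) (hx0 : ∀ i, 0 ≤ xstar i) (hx1 : (∑ i, xstar i) = 1)
    (hxopt : ∀ x : Fin N → ℝ, (∀ i, 0 ≤ x i) → (∑ i, x i) = 1 →
      (∑ i, x i * ‖s i‖ ^ 2) - ‖∑ i, x i • s i‖ ^ 2 ≤
        (∑ i, xstar i * ‖s i‖ ^ 2) - ‖∑ i, xstar i • s i‖ ^ 2)
    (zstar : EuclideanSpace ℝ (Fin d)) (hz : zstar = ∑ i, xstar i • s i)
    (rstar : ℝ) (hr0 : 0 ≤ rstar)
    (hr : rstar ^ 2 = (∑ i, xstar i * ‖s i‖ ^ 2) - ‖∑ i, xstar i • s i‖ ^ 2) :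
    ∀ i, 0 < xstar i → dist zstar (s i) = rstar := by
  intro i hi
  have hmax : IsMaxOn (mebDual s) (stdSimplex ℝ (Fin N)) xstar :=
    isMaxOn_iff.2 fun x hx => hxopt x hx.1 hx.2
  have hsq := norm_sub_sq_eq_mebDual_of_isMaxOn s ⟨hx0, hx1⟩ hmax hi
  rw [hz, dist_eq_norm]
  exact (sq_eq_sq₀ (norm_nonneg _) hr0).1 (hsq.trans hr.symm)

/-- Complementary slackness for the MEB: if `x*` solves the dual MEB problem,
`z* = Σᵢ xᵢ* sᵢ` is the MEB center, and `r*² = f(x*)` is the optimal value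
(the squared MEB radius), then `xᵢ* > 0` implies `‖z* − sᵢ‖ = r*`. -/
theorem meb_complementary_slackness (d N : ℕ) (hN : 1 ≤ N)
    (s : Fin N → EuclideanSpace ℝ (Fin d))
    (xstar : Fin N → ℝ) (hx0 : ∀ i, 0 ≤ xstar i) (hx1 : (∑ i, xstar i) = 1)
    (hxopt : ∀ x : Fin N → ℝ, (∀ i, 0 ≤ x i) → (∑ i, x i) = 1 →
      (∑ i, x i * ‖s i‖ ^ 2) - ‖∑ i, x i • s i‖ ^ 2 ≤
        (∑ i, xstar i * ‖s i‖ ^ 2) - ‖∑ i, xstar i • s i‖ ^ 2)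
    (zstar : EuclideanSpace ℝ (Fin d)) (hz : zstar = ∑ i, xstar i • s i)
    (rstar : ℝ) (hr0 : 0 ≤ rstar)
    (hr : rstar ^ 2 = (∑ i, xstar i * ‖s i‖ ^ 2) - ‖∑ i, xstar i • s i‖ ^ 2) :
    ∀ i, 0 < xstar i → dist zstar (s i) = rstar :=
  meb_complementary_slackness_general d N s xstar hx0 hx1 hxopt zstar hz rstar hr0 hr
end
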